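/- arXiv:math/0612460 — 2 statements merged into one kernel-verified Lean document; each statement's English description precedes it below -/
import Mathlib

section
/- Let (A, A*) be a tridiagonal pair on V with eigenspace orderings V_0, ..., V_d of A and V*_0, ..., V*_d of A*, and assume d ≥ 1. Let D denote the subalgebra of End(V) generated by A. If X ∈ D satisfies X V*_0 ⊆ V*_0 + V*_1, then there exist scalars r, s ∈ K such that X = rA + sI. -/
open Polynomial

/-- A tridiagonal pair on `V`, with eigenspace orderings `Ev 0, ..., Ev d` of `A`
(with eigenvalues `θ 0, ..., θ d`) and `Ew 0, ..., Ew d` of `B = A*`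
(with eigenvalues `θ' 0, ..., θ' d`).  For indices `i > d` we set `Ev i = ⊥`,
`Ew i = ⊥`, encoding the conventions `V_{-1} = 0`, `V_{d+1} = 0`
(note `Ev (0 - 1) = Ev 0` by truncated subtraction, which is harmless in the
tridiagonal conditions below since `Ev i` appears in the sum anyway). -/
structure TridiagonalPair (K V : Type*) [Field K] [AddCommGroup V] [Module K V]
    [FiniteDimensional K V] where
  A : Module.End K V
  B : Module.End K V
  d : ℕ
  Ev : ℕ → Submodule K V
  Ew : ℕ → Submodule K V
  θ : ℕ → K
  θ' : ℕ → K
  hEv_eig : ∀ i ≤ d, Ev i = Module.End.eigenspace A (θ i)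
  hEv_ne : ∀ i ≤ d, Ev i ≠ ⊥
  hEv_all : ∀ μ : K, Module.End.eigenspace A μ ≠ ⊥ → ∃ i ≤ d, θ i = μ
  hθ_inj : ∀ i ≤ d, ∀ j ≤ d, θ i = θ j → i = j
  hEv_top : (⨆ i ∈ Finset.range (d + 1), Ev i) = ⊤
  hEv_bot : ∀ i, d < i → Ev i = ⊥
  hEw_eig : ∀ i ≤ d, Ew i = Module.End.eigenspace B (θ' i)
  hEw_ne : ∀ i ≤ d, Ew i ≠ ⊥
  hEw_all : ∀ μ : K, Module.End.eigenspace B μ ≠ ⊥ → ∃ i ≤ d, θ' i = μ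
  hθ'_inj : ∀ i ≤ d, ∀ j ≤ d, θ' i = θ' j → i = j
  hEw_top : (⨆ i ∈ Finset.range (d + 1), Ew i) = ⊤
  hEw_bot : ∀ i, d < i → Ew i = ⊥
  hTriB : ∀ i ≤ d, ∀ v ∈ Ev i, B v ∈ Ev (i - 1) ⊔ Ev i ⊔ Ev (i + 1)
  hTriA : ∀ i ≤ d, ∀ v ∈ Ew i, A v ∈ Ew (i - 1) ⊔ Ew i ⊔ Ew (i + 1)
  hIrr : ∀ W : Submodule K V, (∀ v ∈ W, A v ∈ W) → (∀ v ∈ W, B v ∈ W) →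
    W = ⊥ ∨ W = ⊤

/-- The polynomial `τ_i = (λ - θ_0)(λ - θ_1) ⋯ (λ - θ_{i-1})`. -/
noncomputable def tau {K : Type*} [Field K] (θ : ℕ → K) (i : ℕ) : Polynomial K :=
  ∏ k ∈ Finset.range i, (X - C (θ k))

/-!
Write `X = f(A)` in the Newton basis `τ_h(A)` of the eigenvalues `θ_0, θ_1, …` and fix
`v ∈ V*_0`. Then `τ_h(A) v` lies in `(V*_0 + ⋯ + V*_h) ∩ (V_h + ⋯ + V_d)`, while irreducibility
forces `(V*_0 + ⋯ + V*_{k-1}) ∩ (V_k + ⋯ + V_d) = 0`; hence `X v ∈ V*_0 + V*_1` kills the terms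
`h ≥ 2` one at a time from the top. Such a term vanishes as an operator: `τ_h(A) = 0` for `h > d`,
and for `h ≤ d` the map `τ_h(A)` is injective on `V*_0`, because its kernel lies in
`V_0 + ⋯ + V_{d-1}`, which meets `V*_0` trivially by the same irreducibility argument with the
`V_i` in reverse order.
-/

section Tau

variable {K : Type*} [Field K]

theorem tau_zero (θ : ℕ → K) : tau θ 0 = 1 := Finset.prod_range_zero _

theorem tau_one (θ : ℕ → K) : tau θ 1 = X - C (θ 0) := Finset.prod_range_one _

theorem tau_succ (θ : ℕ → K) (n : ℕ) : tau θ (n + 1) = tau θ n * (X - C (θ n)) :=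
  Finset.prod_range_succ _ _

theorem tau_succ' (θ : ℕ → K) (n : ℕ) :
    tau θ (n + 1) = (X - C (θ 0)) * tau (fun k => θ (k + 1)) n :=
  (Finset.prod_range_succ' _ _).trans (mul_comm _ _)

theorem tau_dvd_tau (θ : ℕ → K) {m n : ℕ} (h : m ≤ n) : tau θ m ∣ tau θ n :=
  ⟨_, (Finset.prod_range_mul_prod_Ico _ h).symm⟩

theorem eval_tau_eq_zero (θ : ℕ → K) {j n : ℕ} (h : j < n) : (tau θ n).eval (θ j) = 0 := by
  rw [tau, eval_prod]
  exact Finset.prod_eq_zero (Finset.mem_range.mpr h) (by simp)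

theorem exists_eq_sum_C_mul_tau (θ : ℕ → K) {n : ℕ} {f : K[X]} (hf : f.natDegree ≤ n) :
    ∃ c : ℕ → K, f = ∑ h ∈ Finset.range (n + 1), C (c h) * tau θ h := by
  induction n generalizing θ f with
  | zero => exact ⟨fun _ => f.coeff 0, by simpa [tau_zero] using eq_C_of_natDegree_le_zero hf⟩
  | succ n ih =>
    have hq : (f /ₘ (X - C (θ 0))).natDegree ≤ n := by
      rw [natDegree_divByMonic _ (monic_X_sub_C _), natDegree_X_sub_C]; omega
    obtain ⟨c, hc⟩ := ih (fun k => θ (k + 1)) hq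
    refine ⟨fun h => if h = 0 then f.eval (θ 0) else c (h - 1), ?_⟩
    conv_lhs => rw [← modByMonic_add_div f (X - C (θ 0)), hc]
    rw [Finset.sum_range_succ' _ (n + 1), modByMonic_X_sub_C_eq_C_eval, Finset.mul_sum, add_comm]
    simp only [tau_succ', tau_zero, Nat.add_one_ne_zero, if_false, if_true, Nat.add_sub_cancel,
      mul_one, mul_left_comm]

end Tau

section Flags

variable {K V : Type*} [Field K] [AddCommGroup V] [Module K V]

theorem aeval_tau_succ_apply (f : Module.End K V) (θ : ℕ → K) (n : ℕ) (v : V) :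
    aeval f (tau θ (n + 1)) v = f (aeval f (tau θ n) v) - θ n • aeval f (tau θ n) v := by
  rw [tau_succ, mul_comm, map_mul, Module.End.mul_apply]
  simp [Algebra.algebraMap_eq_smul_one]

theorem sub_smul_mem_biSup_of_eigen {f : Module.End K V} {E : ℕ → Submodule K V} {θ : ℕ → K}
    (hE : ∀ j, ∀ w ∈ E j, f w = θ j • w) {s t : Set ℕ} (k : ℕ) (hst : ∀ j ∈ s, j ≠ k → j ∈ t)
    {v : V} (hv : v ∈ ⨆ j ∈ s, E j) : f v - θ k • v ∈ ⨆ j ∈ t, E j := by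
  suffices h : ⨆ j ∈ s, E j ≤ (⨆ j ∈ t, E j).comap (f - θ k • 1) by simpa using h hv
  refine iSup₂_le fun j hj w hw => ?_
  have hfw : (f - θ k • 1) w = (θ j - θ k) • w := by simp [hE j w hw, sub_smul]
  rw [Submodule.mem_comap, hfw]
  rcases eq_or_ne j k with rfl | hjk
  · simp
  · exact Submodule.smul_mem _ _ (le_biSup E (hst j hj hjk) hw)

theorem apply_mem_biSup_of_tridiagonal {f : Module.End K V} {E : ℕ → Submodule K V}
    (hE : ∀ j, ∀ w ∈ E j, f w ∈ E (j - 1) ⊔ E j ⊔ E (j + 1)) {s t : Set ℕ}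
    (hst : ∀ j ∈ s, j - 1 ∈ t ∧ j ∈ t ∧ j + 1 ∈ t) {v : V} (hv : v ∈ ⨆ j ∈ s, E j) :
    f v ∈ ⨆ j ∈ t, E j := by
  suffices h : ⨆ j ∈ s, E j ≤ (⨆ j ∈ t, E j).comap f from h hv
  refine iSup₂_le fun j hj w hw => ?_
  obtain ⟨h₁, h₂, h₃⟩ := hst j hj
  exact sup_le (sup_le (le_biSup E h₁) (le_biSup E h₂)) (le_biSup E h₃) (hE j w hw)

-- The top term lies in `F (m + k) ⊓ G (m + k)`, so the sum is peeled off from the top.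
theorem eq_zero_of_sum_mem_of_inf_eq_bot {F G : ℕ → Submodule K V} (hF : Monotone F)
    (hFG : ∀ j, F j ⊓ G j = ⊥) {k : ℕ} {w : ℕ → V} (hw : ∀ h, w h ∈ F (h + k + 1) ⊓ G (h + k))
    (m : ℕ) (hsum : ∑ h ∈ Finset.range m, w h ∈ F k) : ∀ h < m, w h = 0 := by
  induction m with
  | zero => intro h hh; omega
  | succ m ih =>
    rw [Finset.sum_range_succ] at hsum
    have hlow : ∑ h ∈ Finset.range m, w h ∈ F (m + k) :=
      Submodule.sum_mem _ fun h hh => hF (by have := Finset.mem_range.mp hh; omega) (hw h).1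
    have htop : w m ∈ F (m + k) := by
      simpa using sub_mem (hF (by omega) hsum) hlow
    have hwm : w m = 0 := by
      simpa [hFG] using (Submodule.mem_inf.mpr ⟨htop, (hw m).2⟩ : w m ∈ F (m + k) ⊓ G (m + k))
    rw [hwm, add_zero] at hsum
    intro h hh
    rcases Nat.lt_succ_iff_lt_or_eq.mp hh with hh | rfl
    exacts [ih hsum h hh, hwm]

end Flags

namespace TridiagonalPair

variable {K V : Type*} [Field K] [AddCommGroup V] [Module K V] [FiniteDimensional K V]
  (p : TridiagonalPair K V)

def sumEv (s : Set ℕ) : Submodule K V := ⨆ j ∈ s, p.Ev j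

def sumEw (s : Set ℕ) : Submodule K V := ⨆ j ∈ s, p.Ew j

theorem sumEv_mono : Monotone p.sumEv := fun _ _ h => biSup_mono h

theorem sumEw_mono : Monotone p.sumEw := fun _ _ h => biSup_mono h

theorem A_apply_of_mem_Ev (j : ℕ) (w : V) (hw : w ∈ p.Ev j) : p.A w = p.θ j • w := by
  rcases le_or_gt j p.d with hj | hj
  · rw [p.hEv_eig j hj] at hw
    exact Module.End.mem_eigenspace_iff.mp hw
  · rw [p.hEv_bot j hj, Submodule.mem_bot] at hw
    simp [hw]

theorem B_apply_of_mem_Ew (j : ℕ) (w : V) (hw : w ∈ p.Ew j) : p.B w = p.θ' j • w := by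
  rcases le_or_gt j p.d with hj | hj
  · rw [p.hEw_eig j hj] at hw
    exact Module.End.mem_eigenspace_iff.mp hw
  · rw [p.hEw_bot j hj, Submodule.mem_bot] at hw
    simp [hw]

theorem B_mem_of_mem_Ev (j : ℕ) (w : V) (hw : w ∈ p.Ev j) :
    p.B w ∈ p.Ev (j - 1) ⊔ p.Ev j ⊔ p.Ev (j + 1) := by
  rcases le_or_gt j p.d with hj | hj
  · exact p.hTriB j hj w hw
  · rw [p.hEv_bot j hj, Submodule.mem_bot] at hw
    simp [hw]

theorem A_mem_of_mem_Ew (j : ℕ) (w : V) (hw : w ∈ p.Ew j) :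
    p.A w ∈ p.Ew (j - 1) ⊔ p.Ew j ⊔ p.Ew (j + 1) := by
  rcases le_or_gt j p.d with hj | hj
  · exact p.hTriA j hj w hw
  · rw [p.hEw_bot j hj, Submodule.mem_bot] at hw
    simp [hw]

theorem sumEv_Iio_eq_top : p.sumEv (Set.Iio (p.d + 1)) = ⊤ := by
  simpa [sumEv] using p.hEv_top

theorem sumEv_ne_top {i : ℕ} (hi : i ≤ p.d) {s : Set ℕ} (his : i ∉ s) : p.sumEv s ≠ ⊤ := by
  have hle : p.sumEv s ≤ ⨆ μ ∈ p.θ '' (s ∩ Set.Iic p.d), p.A.eigenspace μ := by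
    refine iSup₂_le fun j hj => ?_
    rcases le_or_gt j p.d with hjd | hjd
    · rw [p.hEv_eig j hjd]
      exact le_biSup p.A.eigenspace ⟨j, ⟨hj, hjd⟩, rfl⟩
    · simp [p.hEv_bot j hjd]
  have hθi : p.θ i ∉ p.θ '' (s ∩ Set.Iic p.d) := by
    rintro ⟨j, ⟨hj, hjd⟩, hji⟩
    exact his (p.hθ_inj j hjd i hi hji ▸ hj)
  have hdisj : Disjoint (p.Ev i) (p.sumEv s) := by
    rw [p.hEv_eig i hi]
    exact ((Module.End.eigenspaces_iSupIndep p.A).disjoint_biSup hθi).mono_right hle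
  intro htop
  exact p.hEv_ne i hi (by simpa [htop] using hdisj)

/-- `⨆ k, (V*_0 + ⋯ + V*_{k-1}) ⊓ G k` is invariant under `A` and `B` and lies in the proper
subspace `G 1`, so it vanishes by irreducibility. -/
theorem sumEw_Iio_inf_eq_bot {G : ℕ → Submodule K V} (hG : Antitone G) (hG1 : G 1 ≠ ⊤)
    (a : ℕ → K) (hAG : ∀ k, ∀ v ∈ G k, p.A v - a k • v ∈ G (k + 1))
    (hBG : ∀ k, ∀ v ∈ G (k + 1), p.B v ∈ G k) (k : ℕ) :
    p.sumEw (Set.Iio k) ⊓ G k = ⊥ := by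
  set F : ℕ → Submodule K V := fun k => p.sumEw (Set.Iio k)
  have hF0 : F 0 = ⊥ := by simp [F, sumEw]
  have hAF : ∀ k, ∀ v ∈ F k, p.A v ∈ F (k + 1) := fun k v =>
    apply_mem_biSup_of_tridiagonal p.A_mem_of_mem_Ew fun j hj => by
      simp only [Set.mem_Iio] at hj ⊢; omega
  have hBF : ∀ k, ∀ v ∈ F (k + 1), p.B v - p.θ' k • v ∈ F k := fun k v =>
    sub_smul_mem_biSup_of_eigen p.B_apply_of_mem_Ew k fun j hj hjk => by
      simp only [Set.mem_Iio] at hj ⊢; omega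
  have hFk : ∀ k, F k ≤ F (k + 1) := fun k => p.sumEw_mono (Set.Iio_subset_Iio k.le_succ)
  set W := ⨆ k, F k ⊓ G k
  have hW : ∀ k, F k ⊓ G k ≤ W := le_iSup (fun k => F k ⊓ G k)
  have hA : W ≤ W.comap p.A := iSup_le fun k v hv => by
    rw [Submodule.mem_comap, ← sub_add_cancel (p.A v) (a k • v)]
    refine W.add_mem (hW (k + 1) ⟨?_, hAG k v hv.2⟩) (W.smul_mem _ (hW k hv))
    exact sub_mem (hAF k v hv.1) (Submodule.smul_mem _ _ (hFk k hv.1))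
  have hB : W ≤ W.comap p.B := iSup_le fun k v hv => by
    cases k with
    | zero =>
      rw [hF0, bot_inf_eq, Submodule.mem_bot] at hv
      simp [hv]
    | succ k =>
      rw [Submodule.mem_comap, ← sub_add_cancel (p.B v) (p.θ' k • v)]
      refine W.add_mem (hW k ⟨hBF k v hv.1, ?_⟩) (W.smul_mem _ (hW _ hv))
      exact sub_mem (hBG k v hv.2) (Submodule.smul_mem _ _ (hG k.le_succ hv.2))
  have hW1 : W ≤ G 1 := iSup_le fun k => by
    rcases k with _ | k
    · simp [hF0]
    · exact inf_le_right.trans (hG (Nat.succ_le_succ (Nat.zero_le k)))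
  rcases p.hIrr W (fun v hv => hA hv) (fun v hv => hB hv) with hbot | htop
  · exact le_bot_iff.mp (hbot ▸ hW k)
  · exact absurd (top_le_iff.mp (htop ▸ hW1)) hG1

theorem sumEw_Iio_inf_sumEv_Ici (k : ℕ) : p.sumEw (Set.Iio k) ⊓ p.sumEv (Set.Ici k) = ⊥ :=
  p.sumEw_Iio_inf_eq_bot (fun _ _ h => p.sumEv_mono (Set.Ici_subset_Ici.mpr h))
    (p.sumEv_ne_top (Nat.zero_le _) (by simp)) p.θ
    (fun k v => sub_smul_mem_biSup_of_eigen p.A_apply_of_mem_Ev k fun j hj hjk => by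
      simp only [Set.mem_Ici] at hj ⊢; omega)
    (fun k v => apply_mem_biSup_of_tridiagonal p.B_mem_of_mem_Ev fun j hj => by
      simp only [Set.mem_Ici] at hj ⊢; omega) k

-- The previous lemma for the flag `G k = V_0 + ⋯ + V_{d-k}`, i.e. with the `V_i` reversed.
theorem Ew_zero_inf_sumEv_Iio : p.Ew 0 ⊓ p.sumEv (Set.Iio p.d) = ⊥ := by
  have h := p.sumEw_Iio_inf_eq_bot (G := fun k => p.sumEv (Set.Iio (p.d + 1 - k)))
    (fun _ _ h => p.sumEv_mono (Set.Iio_subset_Iio (by omega)))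
    (p.sumEv_ne_top le_rfl (by simp)) (fun k => p.θ (p.d - k))
    (fun k v => sub_smul_mem_biSup_of_eigen p.A_apply_of_mem_Ev _ fun j hj hjk => by
      simp only [Set.mem_Iio] at hj ⊢; omega)
    (fun k v => apply_mem_biSup_of_tridiagonal p.B_mem_of_mem_Ev fun j hj => by
      simp only [Set.mem_Iio] at hj ⊢; omega) 1
  simp only [Nat.add_sub_cancel] at h
  exact eq_bot_mono (inf_le_inf_right _ (le_biSup p.Ew (by simp))) h

theorem aeval_apply_of_mem_Ev {j : ℕ} {w : V} (hw : w ∈ p.Ev j) (q : K[X]) :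
    aeval p.A q w = q.eval (p.θ j) • w :=
  Module.End.aeval_apply_of_mem_apply_eq_smul (p.A_apply_of_mem_Ev j w hw)

theorem sumEv_le_ker_aeval {q : K[X]} {s : Set ℕ} (hq : ∀ j ∈ s, q.eval (p.θ j) = 0) :
    p.sumEv s ≤ LinearMap.ker (aeval p.A q) :=
  iSup₂_le fun j hj w hw => by simp [p.aeval_apply_of_mem_Ev hw, hq j hj]

theorem aeval_tau_eq_zero {n : ℕ} (hn : p.d < n) : aeval p.A (tau p.θ n) = 0 := by
  refine LinearMap.ker_eq_top.mp (top_le_iff.mp ?_)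
  rw [← p.sumEv_Iio_eq_top]
  exact p.sumEv_le_ker_aeval fun j hj =>
    eval_tau_eq_zero _ (lt_of_lt_of_le (Set.mem_Iio.mp hj) hn)

theorem eval_tau_self_ne_zero {i : ℕ} (hi : i ≤ p.d) : (tau p.θ i).eval (p.θ i) ≠ 0 := by
  rw [tau, eval_prod]
  refine Finset.prod_ne_zero_iff.mpr fun k hk => ?_
  have hki : k < i := Finset.mem_range.mp hk
  rw [eval_sub, eval_X, eval_C, sub_ne_zero]
  exact fun h => hki.ne' (p.hθ_inj i hi k (by omega) h)

theorem mem_sumEv_Iio_of_aeval_tau_eq_zero {v : V} (hv : aeval p.A (tau p.θ p.d) v = 0) :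
    v ∈ p.sumEv (Set.Iio p.d) := by
  have hsplit : p.sumEv (Set.Iio (p.d + 1)) = p.Ev p.d ⊔ p.sumEv (Set.Iio p.d) := by
    rw [sumEv, sumEv, ← iSup_insert]
    congr!
    ext j; simp only [Set.mem_Iio, Set.mem_insert_iff]; omega
  obtain ⟨w, hw, u, hu, rfl⟩ :=
    Submodule.mem_sup.mp (hsplit ▸ p.sumEv_Iio_eq_top ▸ Submodule.mem_top (x := v))
  have hu0 : aeval p.A (tau p.θ p.d) u = 0 :=
    p.sumEv_le_ker_aeval (fun j hj => eval_tau_eq_zero _ hj) hu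
  rw [map_add, hu0, add_zero, p.aeval_apply_of_mem_Ev hw, smul_eq_zero] at hv
  rw [hv.resolve_left (p.eval_tau_self_ne_zero le_rfl), zero_add]
  exact hu

theorem aeval_tau_apply_ne_zero {n : ℕ} (hn : n ≤ p.d) {v : V} (hv : v ∈ p.Ew 0) (hv0 : v ≠ 0) :
    aeval p.A (tau p.θ n) v ≠ 0 := by
  intro h
  have hd : aeval p.A (tau p.θ p.d) v = 0 := by
    obtain ⟨q, hq⟩ := tau_dvd_tau p.θ hn
    rw [hq, mul_comm, map_mul, Module.End.mul_apply, h, map_zero]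
  have hmem : v ∈ p.Ew 0 ⊓ p.sumEv (Set.Iio p.d) := ⟨hv, p.mem_sumEv_Iio_of_aeval_tau_eq_zero hd⟩
  rw [p.Ew_zero_inf_sumEv_Iio, Submodule.mem_bot] at hmem
  exact hv0 hmem

theorem smul_aeval_tau_eq_zero {n : ℕ} {c : K}
    (h : ∀ v ∈ p.Ew 0, c • aeval p.A (tau p.θ n) v = 0) : c • aeval p.A (tau p.θ n) = 0 := by
  rcases lt_or_ge p.d n with hn | hn
  · rw [p.aeval_tau_eq_zero hn, smul_zero]
  obtain ⟨v, hv, hv0⟩ := Submodule.exists_mem_ne_zero_of_ne_bot (p.hEw_ne 0 (Nat.zero_le _))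
  rw [(smul_eq_zero.mp (h v hv)).resolve_right (p.aeval_tau_apply_ne_zero hn hv hv0), zero_smul]

theorem aeval_tau_mem_sumEw_Iio (θ₀ : ℕ → K) {k : ℕ} {v : V} (hv : v ∈ p.sumEw (Set.Iio k))
    (n : ℕ) : aeval p.A (tau θ₀ n) v ∈ p.sumEw (Set.Iio (n + k)) := by
  induction n with
  | zero => simpa [tau_zero] using hv
  | succ n ih =>
    rw [aeval_tau_succ_apply]
    refine sub_mem ?_ (Submodule.smul_mem _ _ (p.sumEw_mono (Set.Iio_subset_Iio (by omega)) ih))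
    exact apply_mem_biSup_of_tridiagonal p.A_mem_of_mem_Ew (fun j hj => by
      simp only [Set.mem_Iio] at hj ⊢; omega) ih

theorem aeval_tau_mem_sumEv_Ici (v : V) (n : ℕ) :
    aeval p.A (tau p.θ n) v ∈ p.sumEv (Set.Ici n) := by
  induction n with
  | zero =>
    have hv : v ∈ p.sumEv (Set.Iio (p.d + 1)) := p.sumEv_Iio_eq_top ▸ Submodule.mem_top
    simpa [tau_zero] using p.sumEv_mono (fun j _ => Set.mem_Ici.mpr (Nat.zero_le j)) hv
  | succ n ih =>
    rw [aeval_tau_succ_apply]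
    exact sub_smul_mem_biSup_of_eigen p.A_apply_of_mem_Ev n (fun j hj hjn => by
      simp only [Set.mem_Ici] at hj ⊢; omega) ih

theorem smul_aeval_tau_apply_eq_zero {c : ℕ → K} {m : ℕ} {v : V} (hv : v ∈ p.Ew 0)
    (hsum : ∑ h ∈ Finset.range (m + 2), c h • aeval p.A (tau p.θ h) v ∈ p.sumEw (Set.Iio 2)) :
    ∀ h < m, c (h + 2) • aeval p.A (tau p.θ (h + 2)) v = 0 := by
  have hv1 : v ∈ p.sumEw (Set.Iio 1) := le_biSup p.Ew (by simp) hv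
  have hlow : ∀ h < 2, c h • aeval p.A (tau p.θ h) v ∈ p.sumEw (Set.Iio 2) := fun h hh =>
    Submodule.smul_mem _ _ (p.sumEw_mono (Set.Iio_subset_Iio (by omega))
      (p.aeval_tau_mem_sumEw_Iio p.θ hv1 h))
  refine eq_zero_of_sum_mem_of_inf_eq_bot (fun _ _ h => p.sumEw_mono (Set.Iio_subset_Iio h))
    p.sumEw_Iio_inf_sumEv_Ici
    (fun h => ⟨Submodule.smul_mem _ _ (p.aeval_tau_mem_sumEw_Iio p.θ hv1 _),
      Submodule.smul_mem _ _ (p.aeval_tau_mem_sumEv_Ici v _)⟩) m ?_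
  rw [Finset.sum_range_succ', Finset.sum_range_succ', add_assoc] at hsum
  simpa using sub_mem hsum (add_mem (hlow 1 one_lt_two) (hlow 0 two_pos))

end TridiagonalPair

theorem stmt7_general {K V : Type*} [Field K] [AddCommGroup V] [Module K V]
    [FiniteDimensional K V]
    (p : TridiagonalPair K V)
    (X : Module.End K V) (hX : X ∈ Algebra.adjoin K {p.A})
    (hXV : ∀ v ∈ p.Ew 0, X v ∈ p.Ew 0 ⊔ p.Ew 1) :
    ∃ r s : K, X = r • p.A + s • (1 : Module.End K V) := by
  obtain ⟨f, rfl⟩ := (AlgHom.mem_range _).mp (Algebra.adjoin_singleton_eq_range_aeval K p.A ▸ hX)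
  obtain ⟨c, hc⟩ := exists_eq_sum_C_mul_tau p.θ (Nat.le_succ f.natDegree)
  have hf : aeval p.A f = ∑ h ∈ Finset.range (f.natDegree + 2), c h • aeval p.A (tau p.θ h) := by
    conv_lhs => rw [hc]
    simp [Algebra.smul_def]
  have h01 : p.Ew 0 ⊔ p.Ew 1 ≤ p.sumEw (Set.Iio 2) :=
    sup_le (le_biSup p.Ew (by simp)) (le_biSup p.Ew (by simp))
  have hsum : ∀ v ∈ p.Ew 0, ∑ h ∈ Finset.range (f.natDegree + 2),
      c h • aeval p.A (tau p.θ h) v ∈ p.sumEw (Set.Iio 2) := fun v hv => by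
    simpa [hf] using h01 (hXV v hv)
  have htail : ∀ h < f.natDegree, c (h + 2) • aeval p.A (tau p.θ (h + 2)) = 0 := fun h hh =>
    p.smul_aeval_tau_eq_zero fun v hv => p.smul_aeval_tau_apply_eq_zero hv (hsum v hv) h hh
  refine ⟨c 1, c 0 - c 1 * p.θ 0, ?_⟩
  rw [hf, Finset.sum_range_succ', Finset.sum_range_succ',
    Finset.sum_eq_zero fun h hh => htail h (Finset.mem_range.mp hh), tau_one, tau_zero]
  simp only [zero_add, aeval_sub, aeval_X, aeval_C, Algebra.algebraMap_eq_smul_one, map_one]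
  module

/-- Assume `d ≥ 1`.  If `X ∈ D` satisfies `X V*_0 ⊆ V*_0 + V*_1`, then there
exist `r, s ∈ K` with `X = r A + s I`. -/
theorem stmt7 {K V : Type*} [Field K] [AddCommGroup V] [Module K V]
    [FiniteDimensional K V] (hpos : 0 < Module.finrank K V)
    (p : TridiagonalPair K V)
    (hd : 1 ≤ p.d) (X : Module.End K V) (hX : X ∈ Algebra.adjoin K {p.A})
    (hXV : ∀ v ∈ p.Ew 0, X v ∈ p.Ew 0 ⊔ p.Ew 1) :
    ∃ r s : K, X = r • p.A + s • (1 : Module.End K V) :=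
  stmt7_general p X hX hXV
end

section
/- Let (A, A*) be a tridiagonal pair on V with eigenspace orderings V_0, ..., V_d of A and V*_0, ..., V*_d of A*, and let (A', A*') be a second tridiagonal pair on V with eigenspace orderings V'_0, ..., V'_d of A' and V*'_0, ..., V*'_d of A*'. Assume V_i = V'_i and V*_i = V*'_i for 0 ≤ i ≤ d. Then Span{A, I} = Span{A', I} and Span{A*, I} = Span{A*', I} (as K-subspaces of End(V)). -/
/-!
Since `A'` acts on each `V_i` as a scalar, `A' = f(A)` for a polynomial `f` of degree at most `d`;
write `f = X² g + (linear part)`. For `0 ≠ v ∈ V*_0` and a polynomial `h` of degree `n ≥ 1`, the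
vector `h(A) v` lies in `V*_0 + ⋯ + V*_n` but not in `V*_0 + ⋯ + V*_{n-1}`: its leading part
`τ_n(A) v` lies in `V_n + ⋯ + V_d`, which meets `V*_0 + ⋯ + V*_{n-1}` trivially, and it is nonzero
because `V_0 + ⋯ + V_{n-1}` meets `V*_0` trivially. Both intersections vanish by irreducibility: the
sum of all `(V_0 + ⋯ + V_{a-1}) ∩ (V*_0 + ⋯ + V*_{b-1})` with `a + b ≤ d + 1` is invariant under
`A` and `A*` and is a proper subspace (for the first one, use the reversed ordering of the `V_i`).
As `A'` maps `V*_0` into `V*_0 + V*_1`, this forces `g = 0`, so `A' ∈ Span{A, I}`; the two pairs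
play symmetric roles, as do `A` and `A*`.
-/

open Polynomial

section General

variable {K V : Type*} [Field K] [AddCommGroup V] [Module K V]

theorem monic_tau (θ : ℕ → K) (n : ℕ) : (tau θ n).Monic :=
  monic_prod_of_monic _ _ fun k _ => monic_X_sub_C (θ k)

theorem natDegree_tau (θ : ℕ → K) (n : ℕ) : (tau θ n).natDegree = n := by
  rw [tau, natDegree_prod_of_monic _ _ fun k _ => monic_X_sub_C (θ k)]
  simp

theorem aeval_tau_succ (T : Module.End K V) (θ : ℕ → K) (i : ℕ) :
    aeval T (tau θ (i + 1)) = aeval T (tau θ i) * (T - algebraMap K _ (θ i)) := by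
  rw [tau, Finset.prod_range_succ, ← tau, aeval_mul, map_sub, aeval_X, aeval_C]

theorem ker_aeval_tau (T : Module.End K V) {θ : ℕ → K} {n : ℕ} (hθ : Set.InjOn θ (Set.Iio n)) :
    LinearMap.ker (aeval T (tau θ n)) = ⨆ k < n, T.eigenspace (θ k) := by
  induction n with
  | zero => simp [tau, Module.End.one_eq_id]
  | succ n ih =>
    have hcop : IsCoprime (tau θ n) (X - C (θ n)) :=
      IsCoprime.prod_left fun k hk => by
        have hkn := Finset.mem_range.mp hk
        refine isCoprime_X_sub_C_of_isUnit_sub (isUnit_iff_ne_zero.mpr (sub_ne_zero.mpr ?_))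
        exact fun h => hkn.ne (hθ (hkn.trans n.lt_succ_self) n.lt_succ_self h)
    rw [tau, Finset.prod_range_succ, ← tau, ← sup_ker_aeval_eq_ker_aeval_mul_of_coprime _ hcop,
      ih (hθ.mono (Set.Iio_subset_Iio n.le_succ)), Nat.iSup_lt_succ, map_sub, aeval_X, aeval_C,
      Module.End.eigenspace_def, Module.algebraMap_end_eq_smul_id, Module.End.one_eq_id]

/-- Modelled on `F i = V*_0 + ⋯ + V*_{i-1}` (shifted by one, so that `F 0 = 0`). -/
structure IsTDFlag (T S : Module.End K V) (θ : ℕ → K) (F : ℕ → Submodule K V) : Prop where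
  bot : F 0 = ⊥
  mono : Monotone F
  sub_smul_mem : ∀ i, ∀ v ∈ F (i + 1), T v - θ i • v ∈ F i
  map_mem : ∀ i, ∀ v ∈ F i, S v ∈ F (i + 1)

namespace IsTDFlag

variable {T S : Module.End K V} {θ θ' : ℕ → K} {F G : ℕ → Submodule K V}

theorem aeval_tau_apply_eq_zero (hF : IsTDFlag T S θ F) {i : ℕ} {v : V} (hv : v ∈ F i) :
    aeval T (tau θ i) v = 0 := by
  induction i generalizing v with
  | zero => rw [hF.bot, Submodule.mem_bot] at hv; simp [hv]
  | succ i ih =>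
    rw [aeval_tau_succ, Module.End.mul_apply, LinearMap.sub_apply, Module.algebraMap_end_apply]
    exact ih (hF.sub_smul_mem i v hv)

theorem notMem_of_hasEigenvector (hF : IsTDFlag T S θ F) {i : ℕ} {μ : K} {v : V}
    (hv : T.HasEigenvector μ v) (hμ : ∀ k < i, θ k ≠ μ) : v ∉ F i := fun hvF => by
  have h := hF.aeval_tau_apply_eq_zero hvF
  rw [Module.End.aeval_apply_of_hasEigenvector hv, smul_eq_zero, tau, eval_prod,
    Finset.prod_eq_zero_iff] at h
  obtain ⟨k, hk, hk0⟩ | h := h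
  · rw [eval_sub, eval_X, eval_C, sub_eq_zero] at hk0
    exact hμ k (Finset.mem_range.mp hk) hk0.symm
  · exact hv.2 h

theorem pow_apply_mem (hF : IsTDFlag T S θ F) {i : ℕ} {v : V} (hv : v ∈ F i) (k : ℕ) :
    (S ^ k) v ∈ F (i + k) := by
  induction k with
  | zero => simpa using hv
  | succ k ih => rw [pow_succ', Module.End.mul_apply]; exact hF.map_mem _ _ ih

theorem aeval_apply_mem (hF : IsTDFlag T S θ F) {i n : ℕ} {v : V} (hv : v ∈ F i) {f : K[X]}
    (hf : f.natDegree ≤ n) : aeval S f v ∈ F (i + n) := by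
  rw [aeval_eq_sum_range, LinearMap.sum_apply]
  refine Submodule.sum_mem _ fun k hk => ?_
  rw [LinearMap.smul_apply]
  exact Submodule.smul_mem _ _ <|
    hF.mono (by rw [Finset.mem_range] at hk; omega) (hF.pow_apply_mem hv k)

theorem apply_mem_iSup_inf (hF : IsTDFlag T S θ F) (hG : IsTDFlag S T θ' G) (m : ℕ) {v : V}
    (hv : v ∈ ⨆ (a) (b) (_ : a + b ≤ m), F a ⊓ G b) :
    T v ∈ ⨆ (a) (b) (_ : a + b ≤ m), F a ⊓ G b := by
  set P := ⨆ (a) (b) (_ : a + b ≤ m), F a ⊓ G b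
  have le_P : ∀ a b, a + b ≤ m → F a ⊓ G b ≤ P := fun a b h =>
    le_iSup₂_of_le a b (le_iSup_of_le h le_rfl)
  suffices P ≤ P.comap T from this hv
  refine iSup₂_le fun a b => iSup_le fun hab w hw => ?_
  obtain ⟨hwF, hwG⟩ := Submodule.mem_inf.mp hw
  rcases a with _ | a
  · rw [hF.bot, Submodule.mem_bot] at hwF
    simp [hwF]
  -- `T - θ a` trades one step of `F` for one step of `G`.
  rw [Submodule.mem_comap, ← sub_add_cancel (T w) (θ a • w)]
  refine P.add_mem (le_P a (b + 1) (by omega) (Submodule.mem_inf.mpr ⟨hF.sub_smul_mem a w hwF, ?_⟩))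
    (P.smul_mem _ (le_P _ _ hab hw))
  exact Submodule.sub_mem _ (hG.map_mem b w hwG) (Submodule.smul_mem _ _ (hG.mono b.le_succ hwG))

theorem inf_eq_bot (hF : IsTDFlag T S θ F) (hG : IsTDFlag S T θ' G)
    (hirr : ∀ W : Submodule K V, (∀ v ∈ W, T v ∈ W) → (∀ v ∈ W, S v ∈ W) → W = ⊥ ∨ W = ⊤)
    {n i j : ℕ} (hn : G n ≠ ⊤) (hij : i + j ≤ n + 1) : F i ⊓ G j = ⊥ := by
  set P := ⨆ (a) (b) (_ : a + b ≤ n + 1), F a ⊓ G b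
  have hP : P = ⨆ (b) (a) (_ : b + a ≤ n + 1), G b ⊓ F a := by
    rw [iSup_comm]
    exact iSup_congr fun b => iSup_congr fun a => by rw [add_comm, inf_comm]
  have hPG : P ≤ G n := iSup₂_le fun a b => iSup_le fun hab => by
    rcases a with _ | a
    · simp [hF.bot]
    · exact inf_le_right.trans (hG.mono (by omega))
  rcases hirr P (fun v hv => hF.apply_mem_iSup_inf hG _ hv)
    (fun v hv => hP ▸ hG.apply_mem_iSup_inf hF _ (hP ▸ hv)) with h | h
  · exact le_bot_iff.mp (h ▸ le_iSup₂_of_le i j (le_iSup_of_le hij le_rfl))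
  · exact absurd (top_le_iff.mp (h ▸ hPG)) hn

end IsTDFlag

def lowerSup (E : ℕ → Submodule K V) (i : ℕ) : Submodule K V := ⨆ k < i, E k

theorem le_lowerSup {E : ℕ → Submodule K V} {k i : ℕ} (h : k < i) : E k ≤ lowerSup E i :=
  le_iSup₂_of_le k h le_rfl

structure IsTDSeq (T S : Module.End K V) (θ : ℕ → K) (E : ℕ → Submodule K V) : Prop where
  apply_eq : ∀ k, ∀ v ∈ E k, T v = θ k • v
  map_mem : ∀ k, ∀ v ∈ E k, S v ∈ E (k - 1) ⊔ E k ⊔ E (k + 1)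

namespace IsTDSeq

variable {T S : Module.End K V} {θ : ℕ → K} {E : ℕ → Submodule K V}

theorem isTDFlag (hE : IsTDSeq T S θ E) : IsTDFlag T S θ (lowerSup E) where
  bot := by simp [lowerSup]
  mono _ _ h := iSup₂_le fun k hk => le_lowerSup (hk.trans_le h)
  sub_smul_mem i := by
    suffices lowerSup E (i + 1) ≤ (lowerSup E i).comap (T - θ i • 1) by
      simpa using fun v hv => this hv
    refine iSup₂_le fun k hk v hv => ?_
    rw [Submodule.mem_comap, LinearMap.sub_apply, hE.apply_eq k v hv, LinearMap.smul_apply,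
      Module.End.one_apply, ← sub_smul]
    rcases (Nat.lt_succ_iff.mp hk).lt_or_eq with hki | rfl
    · exact Submodule.smul_mem _ _ (le_lowerSup hki hv)
    · simp
  map_mem i := by
    suffices lowerSup E i ≤ (lowerSup E (i + 1)).comap S from fun v hv => this hv
    refine iSup₂_le fun k hk v hv => ?_
    have hle : E (k - 1) ⊔ E k ⊔ E (k + 1) ≤ lowerSup E (i + 1) :=
      sup_le (sup_le (le_lowerSup (by omega)) (le_lowerSup (by omega))) (le_lowerSup (by omega))
    exact hle (hE.map_mem k v hv)

end IsTDSeq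

theorem exists_aeval_eq {T A' : Module.End K V} {θ σ : ℕ → K} {E : ℕ → Submodule K V} {n : ℕ}
    (htop : lowerSup E n = ⊤) (hθ : Set.InjOn θ (Set.Iio n))
    (hT : ∀ k < n, ∀ v ∈ E k, T v = θ k • v) (hA' : ∀ k < n, ∀ v ∈ E k, A' v = σ k • v) :
    ∃ f : K[X], f.degree < n ∧ aeval T f = A' := by
  classical
  have hinj : Set.InjOn θ (Finset.range n) := by rwa [Finset.coe_range]
  set f := Lagrange.interpolate (Finset.range n) θ σ
  refine ⟨f, (Lagrange.degree_interpolate_lt σ hinj).trans_eq (by simp), LinearMap.ext fun v => ?_⟩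
  suffices lowerSup E n ≤ LinearMap.eqLocus (aeval T f) A' from this (htop ▸ Submodule.mem_top)
  refine iSup₂_le fun k hk w hw => ?_
  rcases eq_or_ne w 0 with rfl | hw0
  · simp
  rw [LinearMap.mem_eqLocus, hA' k hk w hw, Module.End.aeval_apply_of_hasEigenvector
    ⟨Module.End.mem_eigenspace_iff.mpr (hT k hk w hw), hw0⟩,
    Lagrange.eval_interpolate_at_node σ hinj (Finset.mem_range.mpr hk)]

def reverseUpTo (d : ℕ) (E : ℕ → Submodule K V) (k : ℕ) : Submodule K V :=
  if k ≤ d then E (d - k) else ⊥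

theorem le_reverseUpTo {d j k : ℕ} {E : ℕ → Submodule K V} (h : j + k = d) :
    E j ≤ reverseUpTo d E k := by
  rw [reverseUpTo, if_pos (by omega), show d - k = j by omega]

theorem lowerSup_reverseUpTo (d : ℕ) (E : ℕ → Submodule K V) :
    lowerSup (reverseUpTo d E) (d + 1) = lowerSup E (d + 1) :=
  le_antisymm
    (iSup₂_le fun k hk => by rw [reverseUpTo, if_pos (by omega)]; exact le_lowerSup (by omega))
    (iSup₂_le fun j hj =>
      (le_reverseUpTo (k := d - j) (by omega)).trans (le_lowerSup (by omega)))

theorem IsTDSeq.reverseUpTo {T S : Module.End K V} {θ : ℕ → K} {E : ℕ → Submodule K V} {d : ℕ}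
    (hE : IsTDSeq T S θ E) (hbot : ∀ k, d < k → E k = ⊥) :
    IsTDSeq T S (fun k => θ (d - k)) (reverseUpTo d E) where
  apply_eq k v hv := by
    unfold _root_.reverseUpTo at hv
    split_ifs at hv
    · exact hE.apply_eq _ v hv
    · rw [Submodule.mem_bot] at hv
      simp [hv]
  map_mem k v hv := by
    unfold _root_.reverseUpTo at hv
    split_ifs at hv with hk
    · refine (?_ : E (d - k - 1) ⊔ E (d - k) ⊔ E (d - k + 1) ≤ _) (hE.map_mem _ v hv)
      refine sup_le (sup_le ?_ ?_) ?_
      · rcases Nat.lt_or_ge k d with h | h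
        · exact (le_reverseUpTo (by omega)).trans le_sup_right
        · exact (le_reverseUpTo (k := k) (by omega)).trans (le_sup_right.trans le_sup_left)
      · exact (le_reverseUpTo (by omega)).trans (le_sup_right.trans le_sup_left)
      · rcases Nat.eq_zero_or_pos k with rfl | h
        · simp [hbot (d + 1) d.lt_succ_self]
        · exact (le_reverseUpTo (k := k - 1) (by omega)).trans (le_sup_left.trans le_sup_left)
    · rw [Submodule.mem_bot] at hv
      simp [hv]

theorem Submodule.span_insert_eq_of_mem {R M : Type*} [Semiring R] [AddCommMonoid M]
    [Module R M] {x y : M} {s : Set M} (hx : x ∈ span R (insert y s))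
    (hy : y ∈ span R (insert x s)) : span R (insert x s) = span R (insert y s) :=
  le_antisymm
    (span_le.mpr (Set.insert_subset_iff.mpr ⟨hx, (Set.subset_insert _ _).trans subset_span⟩))
    (span_le.mpr (Set.insert_subset_iff.mpr ⟨hy, (Set.subset_insert _ _).trans subset_span⟩))

end General

namespace TridiagonalPair

variable {K V : Type*} [Field K] [AddCommGroup V] [Module K V] [FiniteDimensional K V]

def swap (p : TridiagonalPair K V) : TridiagonalPair K V where
  A := p.B
  B := p.A
  d := p.d
  Ev := p.Ew
  Ew := p.Ev
  θ := p.θ'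
  θ' := p.θ
  hEv_eig := p.hEw_eig
  hEv_ne := p.hEw_ne
  hEv_all := p.hEw_all
  hθ_inj := p.hθ'_inj
  hEv_top := p.hEw_top
  hEv_bot := p.hEw_bot
  hEw_eig := p.hEv_eig
  hEw_ne := p.hEv_ne
  hEw_all := p.hEv_all
  hθ'_inj := p.hθ_inj
  hEw_top := p.hEv_top
  hEw_bot := p.hEv_bot
  hTriB := p.hTriA
  hTriA := p.hTriB
  hIrr W hA hB := p.hIrr W hB hA

variable (p : TridiagonalPair K V)

theorem isTDSeq_Ev : IsTDSeq p.A p.B p.θ p.Ev where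
  apply_eq k v hv := by
    rcases le_or_gt k p.d with hk | hk
    · exact Module.End.mem_eigenspace_iff.mp (p.hEv_eig k hk ▸ hv)
    · rw [p.hEv_bot k hk, Submodule.mem_bot] at hv
      simp [hv]
  map_mem k v hv := by
    rcases le_or_gt k p.d with hk | hk
    · exact p.hTriB k hk v hv
    · rw [p.hEv_bot k hk, Submodule.mem_bot] at hv
      simp [hv]

theorem lowerSup_Ev_eq_top : lowerSup p.Ev (p.d + 1) = ⊤ := by
  simpa [lowerSup, Finset.mem_range] using p.hEv_top

theorem injOn_θ : Set.InjOn p.θ (Set.Iio (p.d + 1)) := fun i hi j hj h =>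
  p.hθ_inj i (Nat.lt_succ_iff.mp hi) j (Nat.lt_succ_iff.mp hj) h

theorem isTDFlag_Ev : IsTDFlag p.A p.B p.θ (lowerSup p.Ev) :=
  p.isTDSeq_Ev.isTDFlag

theorem isTDFlag_Ew : IsTDFlag p.B p.A p.θ' (lowerSup p.Ew) :=
  p.swap.isTDFlag_Ev

/-- `lowerSup (reverseUpTo p.d p.Ev) (p.d + 1 - i) = V_i + ⋯ + V_d`. -/
theorem isTDFlag_reverseUpTo_Ev :
    IsTDFlag p.A p.B (fun k => p.θ (p.d - k)) (lowerSup (reverseUpTo p.d p.Ev)) :=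
  (p.isTDSeq_Ev.reverseUpTo p.hEv_bot).isTDFlag

theorem lowerSup_Ew_ne_top : lowerSup p.Ew p.d ≠ ⊤ := fun h => by
  obtain ⟨v, hv, hv0⟩ := Submodule.exists_mem_ne_zero_of_ne_bot (p.hEw_ne p.d le_rfl)
  rw [p.hEw_eig p.d le_rfl] at hv
  refine p.isTDFlag_Ew.notMem_of_hasEigenvector ⟨hv, hv0⟩
    (fun k hk hθ => hk.ne (p.hθ'_inj k hk.le p.d le_rfl hθ)) (h ▸ Submodule.mem_top)

theorem inf_lowerSup_Ew_eq_bot {θ : ℕ → K} {F : ℕ → Submodule K V}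
    (hF : IsTDFlag p.A p.B θ F) {i j : ℕ} (hij : i + j ≤ p.d + 1) : F i ⊓ lowerSup p.Ew j = ⊥ :=
  hF.inf_eq_bot p.isTDFlag_Ew p.hIrr p.lowerSup_Ew_ne_top hij

theorem ker_aeval_tau_le {n : ℕ} (hn : n ≤ p.d + 1) :
    LinearMap.ker (aeval p.A (tau p.θ n)) ≤ lowerSup p.Ev n := by
  rw [ker_aeval_tau p.A (p.injOn_θ.mono fun k hk => (Set.mem_Iio.mp hk).trans_le hn)]
  exact iSup₂_le fun k hk => (p.hEv_eig k (by omega)).ge.trans (le_lowerSup hk)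

theorem aeval_tau_apply_mem {n : ℕ} (hn : n ≤ p.d + 1) (v : V) :
    aeval p.A (tau p.θ n) v ∈ lowerSup (reverseUpTo p.d p.Ev) (p.d + 1 - n) := by
  induction n with
  | zero => simp [lowerSup_reverseUpTo, p.lowerSup_Ev_eq_top]
  | succ n ih =>
    have h := p.isTDFlag_reverseUpTo_Ev.sub_smul_mem (p.d - n) _
      (by rw [show p.d - n + 1 = p.d + 1 - n by omega]; exact ih (by omega))
    rw [Nat.sub_sub_self (by omega), show p.d - n = p.d + 1 - (n + 1) by omega] at h
    rwa [tau, Finset.prod_range_succ, mul_comm, ← tau, aeval_mul, Module.End.mul_apply, map_sub,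
      aeval_X, aeval_C, LinearMap.sub_apply, Module.algebraMap_end_apply]

theorem aeval_apply_notMem_lowerSup_Ew {v : V} (hv : v ∈ p.Ew 0) (hv0 : v ≠ 0) {f : K[X]}
    (hf1 : 1 ≤ f.natDegree) (hfd : f.natDegree ≤ p.d) :
    aeval p.A f v ∉ lowerSup p.Ew f.natDegree := by
  set n := f.natDegree
  set c := f.leadingCoeff
  have hf0 : f ≠ 0 := by rintro rfl; simp [n] at hf1
  have hc : c ≠ 0 := leadingCoeff_ne_zero.mpr hf0
  have hr : (f - C c * tau p.θ n).natDegree ≤ n - 1 := by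
    rcases eq_or_ne (f - C c * tau p.θ n) 0 with hr0 | hr0
    · simp [hr0]
    have hlt := degree_sub_lt_left (p := f) (q := C c * tau p.θ n)
      (by rw [degree_C_mul hc, degree_eq_natDegree (monic_tau _ _).ne_zero, natDegree_tau,
        degree_eq_natDegree hf0])
      hf0 (by rw [leadingCoeff_mul, leadingCoeff_C, (monic_tau _ _).leadingCoeff, mul_one])
    rw [degree_eq_natDegree hf0, ← natDegree_lt_iff_degree_lt hr0] at hlt
    omega
  have hvW : v ∈ lowerSup p.Ew 1 := le_lowerSup zero_lt_one hv
  intro hmem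
  have hτW : c • aeval p.A (tau p.θ n) v ∈ lowerSup p.Ew n := by
    have := Submodule.sub_mem _ hmem
      (p.isTDFlag_Ew.mono (by omega) (p.isTDFlag_Ew.aeval_apply_mem hvW hr))
    rwa [← LinearMap.sub_apply, ← map_sub, sub_sub_cancel, aeval_mul, aeval_C,
      Module.End.mul_apply, Module.algebraMap_end_apply] at this
  have hτZ : c • aeval p.A (tau p.θ n) v ∈ lowerSup (reverseUpTo p.d p.Ev) (p.d + 1 - n) :=
    Submodule.smul_mem _ _ (p.aeval_tau_apply_mem (by omega) v)
  have hτ : aeval p.A (tau p.θ n) v = 0 := by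
    have hZW := p.inf_lowerSup_Ew_eq_bot p.isTDFlag_reverseUpTo_Ev (i := p.d + 1 - n) (j := n)
      (by omega)
    exact (smul_eq_zero.mp ((Submodule.eq_bot_iff _).mp hZW _
      (Submodule.mem_inf.mpr ⟨hτZ, hτW⟩))).resolve_left hc
  have hYW := p.inf_lowerSup_Ew_eq_bot p.isTDFlag_Ev (i := n) (j := 1) (by omega)
  exact hv0 ((Submodule.eq_bot_iff _).mp hYW v
    (Submodule.mem_inf.mpr ⟨p.ker_aeval_tau_le (by omega) hτ, hvW⟩))

theorem mem_span_A_one {A' : Module.End K V} {σ : ℕ → K}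
    (hA' : ∀ k ≤ p.d, ∀ v ∈ p.Ev k, A' v = σ k • v)
    (hA'Ew : ∀ v ∈ p.Ew 0, A' v ∈ p.Ew 0 ⊔ p.Ew 1) :
    A' ∈ Submodule.span K {p.A, 1} := by
  obtain ⟨f, hfd, rfl⟩ := exists_aeval_eq p.lowerSup_Ev_eq_top p.injOn_θ
    (fun k _ => p.isTDSeq_Ev.apply_eq k) (fun k hk => hA' k (Nat.lt_succ_iff.mp hk))
  set g := f.divX.divX
  have hf : f = X ^ 2 * g + (C (f.coeff 1) * X + C (f.coeff 0)) := by
    conv_lhs => rw [← X_mul_divX_add f, ← X_mul_divX_add f.divX]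
    rw [coeff_divX]
    ring
  set c₁ := f.coeff 1
  set c₀ := f.coeff 0
  by_cases hg : g = 0
  · rw [hf, hg, Submodule.mem_span_pair]
    exact ⟨c₁, c₀, by simp [Algebra.algebraMap_eq_smul_one]⟩
  exfalso
  obtain ⟨v, hv, hv0⟩ := Submodule.exists_mem_ne_zero_of_ne_bot (p.hEw_ne 0 (Nat.zero_le _))
  have hdeg : (X ^ 2 * g).natDegree = g.natDegree + 2 := by
    rw [natDegree_mul (pow_ne_zero _ X_ne_zero) hg, natDegree_X_pow, add_comm]
  have hdegf : (X ^ 2 * g).natDegree ≤ p.d := by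
    have hsub := natDegree_sub_le_of_le (p := f) (q := C c₁ * X + C c₀) le_rfl natDegree_linear_le
    rw [← eq_sub_of_add_eq hf.symm] at hsub
    have := (natDegree_lt_iff_degree_lt (by rintro rfl; simp [g] at hg)).mpr hfd
    omega
  refine p.aeval_apply_notMem_lowerSup_Ew hv hv0 (by omega) hdegf ?_
  have hsplit : aeval p.A (X ^ 2 * g) v = aeval p.A f v - (c₁ • p.A v + c₀ • v) := by
    conv_rhs => rw [hf]
    simp [Algebra.algebraMap_eq_smul_one]
  have h1 := p.isTDFlag_Ew.map_mem 1 v (le_lowerSup zero_lt_one hv)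
  have h2 : p.Ew 0 ⊔ p.Ew 1 ≤ lowerSup p.Ew 2 :=
    sup_le (le_lowerSup (by norm_num)) (le_lowerSup (by norm_num))
  rw [hsplit]
  refine p.isTDFlag_Ew.mono (by omega) (Submodule.sub_mem _ (h2 (hA'Ew v hv)) ?_)
  exact Submodule.add_mem _ (Submodule.smul_mem _ _ h1)
    (Submodule.smul_mem _ _ (le_lowerSup (by norm_num) hv))

theorem A_mem_span_of_eigenspaces_eq (q : TridiagonalPair K V) (hd : q.d = p.d)
    (hEv : ∀ i ≤ p.d, q.Ev i = p.Ev i) (hEw : ∀ i ≤ p.d, q.Ew i = p.Ew i) :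
    q.A ∈ Submodule.span K {p.A, 1} := by
  refine p.mem_span_A_one (σ := q.θ)
    (fun k hk v hv => q.isTDSeq_Ev.apply_eq k v (hEv k hk ▸ hv)) fun v hv => ?_
  have hEw1 : q.Ew 1 ≤ p.Ew 1 := by
    rcases Nat.lt_or_ge p.d 1 with h | h
    · rw [q.hEw_bot 1 (by omega)]
      exact bot_le
    · exact (hEw 1 h).le
  have h := q.hTriA 0 (Nat.zero_le _) v ((hEw 0 (Nat.zero_le _)).symm ▸ hv)
  rw [Nat.zero_sub, sup_idem, hEw 0 (Nat.zero_le _)] at h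
  exact sup_le_sup_left hEw1 _ h

end TridiagonalPair

theorem stmt8_general {K V : Type*} [Field K] [AddCommGroup V] [Module K V]
    [FiniteDimensional K V]
    (p : TridiagonalPair K V)
    (q : TridiagonalPair K V) (hd : q.d = p.d)
    (hEv : ∀ i ≤ p.d, q.Ev i = p.Ev i) (hEw : ∀ i ≤ p.d, q.Ew i = p.Ew i) :
    Submodule.span K ({p.A, 1} : Set (Module.End K V)) =
      Submodule.span K ({q.A, 1} : Set (Module.End K V)) ∧
    Submodule.span K ({p.B, 1} : Set (Module.End K V)) =
      Submodule.span K ({q.B, 1} : Set (Module.End K V)) := by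
  have hEv' : ∀ i ≤ q.d, p.Ev i = q.Ev i := fun i hi => (hEv i (hd ▸ hi)).symm
  have hEw' : ∀ i ≤ q.d, p.Ew i = q.Ew i := fun i hi => (hEw i (hd ▸ hi)).symm
  exact ⟨Submodule.span_insert_eq_of_mem (q.A_mem_span_of_eigenspaces_eq p hd.symm hEv' hEw')
      (p.A_mem_span_of_eigenspaces_eq q hd hEv hEw),
    Submodule.span_insert_eq_of_mem (q.swap.A_mem_span_of_eigenspaces_eq p.swap hd.symm hEw' hEv')
      (p.swap.A_mem_span_of_eigenspaces_eq q.swap hd hEw hEv)⟩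

/-- If two tridiagonal pairs on `V` have the same eigenspace orderings, then
`Span{A, I} = Span{A', I}` and `Span{A*, I} = Span{A*', I}`. -/
theorem stmt8 {K V : Type*} [Field K] [AddCommGroup V] [Module K V]
    [FiniteDimensional K V] (hpos : 0 < Module.finrank K V)
    (p : TridiagonalPair K V)
    (q : TridiagonalPair K V) (hd : q.d = p.d)
    (hEv : ∀ i ≤ p.d, q.Ev i = p.Ev i) (hEw : ∀ i ≤ p.d, q.Ew i = p.Ew i) :
    Submodule.span K ({p.A, 1} : Set (Module.End K V)) =
      Submodule.span K ({q.A, 1} : Set (Module.End K V)) ∧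
    Submodule.span K ({p.B, 1} : Set (Module.End K V)) =
      Submodule.span K ({q.B, 1} : Set (Module.End K V)) :=
  stmt8_general p q hd hEv hEw
end
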